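/- arXiv:2204.02740 — 2 statements merged into one kernel-verified Lean document; each statement's English description precedes it below -/
import Mathlib

section
/- Let N ≥ 2, θ_l = 2πl/N, p_k = r₀ e^{iθ_k} for k = 1,…,N with r₀ > 0, and f : ℝ → ℝ. Then for each k, Σ_{j≠k, 1≤j≤N} (p_k - p_j) f(|p_k - p_j|) = r₀ F(r₀) e^{iθ_k}, where F(r₀) = Σ_{l=1}^{N-1} (1 - e^{iθ_l}) f(2r₀|sin(θ_l/2)|). -/
/-! With ζ = exp (2πi/N) we have p j = r₀ ζ ^ j, so the summand is N-periodic in j and the sum may be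
reindexed as j = k + l with 1 ≤ l ≤ N - 1. Then p k - p (k + l) = r₀ ζ ^ k (1 - ζ ^ l), and
|1 - ζ ^ l| = 2 |sin (θ l / 2)|. -/

open Complex Finset

lemma Complex.norm_one_sub_exp_ofReal_mul_I (t : ℝ) :
    ‖1 - exp (t * I)‖ = 2 * |Real.sin (t / 2)| := by
  rw [norm_sub_rev, mul_comm, norm_exp_I_mul_ofReal_sub_one, norm_mul, Real.norm_two,
    Real.norm_eq_abs]

namespace Function.Periodic

variable {M : Type*} [AddCommGroup M] {g : ℕ → M} {N : ℕ}

theorem sum_range_add (hg : Periodic g N) (k : ℕ) :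
    ∑ l ∈ range N, g (k + l) = ∑ l ∈ range N, g l := by
  induction k with
  | zero => simp
  | succ k ih =>
    have hshift := (sum_range_succ' (fun l ↦ g (k + l)) N).symm.trans
      (sum_range_succ (fun l ↦ g (k + l)) N)
    rw [add_zero, hg k] at hshift
    simpa only [add_right_comm k 1, add_assoc, ih] using add_right_cancel hshift

theorem sum_erase_Icc_eq_sum_Icc_add (hg : Periodic g N) {k : ℕ} (hk : k ∈ Icc 1 N) :
    ∑ j ∈ (Icc 1 N).erase k, g j = ∑ l ∈ Icc 1 (N - 1), g (k + l) := by
  obtain ⟨n, rfl⟩ : ∃ n, N = n + 1 := Nat.exists_eq_add_one.mpr (by grind)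
  have hIcc : ∑ j ∈ Icc 1 (n + 1), g j = ∑ l ∈ range (n + 1), g l := by
    rw [← Finset.Ico_add_one_right_eq_Icc, sum_Ico_eq_sum_range, Nat.add_sub_cancel,
      sum_range_add hg]
  have hrange : ∑ l ∈ range (n + 1), g (k + l) = g k + ∑ l ∈ Icc 1 n, g (k + l) := by
    rw [sum_range_succ', ← Finset.Ico_add_one_right_eq_Icc, sum_Ico_eq_sum_range,
      Nat.add_sub_cancel, add_zero, add_comm]
    simp only [add_comm 1]
  rw [Nat.add_sub_cancel, ← add_right_inj (g k), add_sum_erase _ _ hk, hIcc, ← hrange,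
    sum_range_add hg]

end Function.Periodic

theorem stmt6_general (N : ℕ) (r₀ : ℝ) (hr : 0 < r₀) (f : ℝ → ℝ)
    (θ : ℕ → ℝ) (hθ : ∀ l : ℕ, θ l = 2 * Real.pi * l / N)
    (p : ℕ → ℂ) (hp : ∀ k : ℕ, p k = (r₀ : ℂ) * Complex.exp ((θ k : ℂ) * Complex.I))
    (F : ℂ) (hF : F = ∑ l ∈ Finset.Icc 1 (N - 1),
      (1 - Complex.exp ((θ l : ℂ) * Complex.I)) * (f (2 * r₀ * |Real.sin (θ l / 2)|) : ℂ))
    (k : ℕ) (hk : k ∈ Finset.Icc 1 N) :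
    ∑ j ∈ (Finset.Icc 1 N).erase k,
        (p k - p j) * (f ‖p k - p j‖ : ℂ) =
      (r₀ : ℂ) * F * Complex.exp ((θ k : ℂ) * Complex.I) := by
  set ζ := exp (2 * Real.pi * I / N)
  have hexp (l : ℕ) : exp (θ l * I) = ζ ^ l := by
    rw [hθ, ← exp_nat_mul]
    push_cast
    ring_nf
  have hζ : ζ ^ N = 1 := (isPrimitiveRoot_exp N (by grind)).pow_eq_one
  have hperiodic : Function.Periodic (fun j ↦ (p k - p j) * (f ‖p k - p j‖ : ℂ)) N := fun j ↦ by
    simp only [hp, hexp, pow_add, hζ, mul_one]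
  rw [hperiodic.sum_erase_Icc_eq_sum_Icc_add hk, hF, mul_sum, sum_mul]
  refine sum_congr rfl fun l _ ↦ ?_
  have hdiff : p k - p (k + l) = r₀ * exp (θ k * I) * (1 - exp (θ l * I)) := by
    simp only [hp, hexp, pow_add]
    ring
  have hnorm : ‖p k - p (k + l)‖ = 2 * r₀ * |Real.sin (θ l / 2)| := by
    rw [hdiff, norm_mul, norm_mul, norm_real, Real.norm_of_nonneg hr.le, norm_exp_ofReal_mul_I,
      norm_one_sub_exp_ofReal_mul_I]
    ring
  rw [hnorm, hdiff]
  ring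

theorem stmt6 (N : ℕ) (hN : 2 ≤ N) (r₀ : ℝ) (hr : 0 < r₀) (f : ℝ → ℝ)
    (θ : ℕ → ℝ) (hθ : ∀ l : ℕ, θ l = 2 * Real.pi * l / N)
    (p : ℕ → ℂ) (hp : ∀ k : ℕ, p k = (r₀ : ℂ) * Complex.exp ((θ k : ℂ) * Complex.I))
    (F : ℂ) (hF : F = ∑ l ∈ Finset.Icc 1 (N - 1),
      (1 - Complex.exp ((θ l : ℂ) * Complex.I)) * (f (2 * r₀ * |Real.sin (θ l / 2)|) : ℂ))
    (k : ℕ) (hk : k ∈ Finset.Icc 1 N) :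
    ∑ j ∈ (Finset.Icc 1 N).erase k,
        (p k - p j) * (f ‖p k - p j‖ : ℂ) =
      (r₀ : ℂ) * F * Complex.exp ((θ k : ℂ) * Complex.I) :=
  stmt6_general N r₀ hr f θ hθ p hp F hF k hk
end

section
/- Let N ≥ 2, r₀ > 0, f : ℝ → ℝ with F(r₀) = Σ_{l=1}^{N-1}(1 - e^{2πil/N}) f(2r₀|sin(πl/N)|) = 0, and let M₁, M₂ > 0 with M₁ = M₂|v₀|² for some v₀ ∈ ℂ. Then p_k(t) = v₀ t + r₀ e^{2πik/N}, q_k(t) = v₀ (constant) solve the system ṗ_k = q_k - Σ_{j≠k}(p_k - p_j) f(|p_k - p_j|), q̇_k = M₁ q_k - M₂ q_k |q_k|² - k₃ Σ_{j≠k}(p_k - p_j) f(|p_k - p_j|), for any k₃ ∈ ℝ. -/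
/-!
The configuration is a rigid regular polygon translating with velocity `v₀`. Relative positions
`p_k - p_j = r₀ (ω^k - ω^j)`, `ω = e^{2πi/N}`, do not depend on `t`, and after writing `j = k + l`
(indices mod `N`) they equal `r₀ ω^k (1 - ω^l)`, of length `2 r₀ |sin (π l / N)|`. Hence the
interaction sum at vertex `k` is `r₀ ω^k F(r₀) = 0`, and what is left of the system is
`ṗ_k = v₀ = q_k` and `q̇_k = 0 = (M₁ - M₂ |v₀|²) v₀`.
-/

open Complex Finset

lemma Finset.sum_erase_Icc_eq_sum_Icc_add {M : Type*} [AddCommMonoid M] {N k : ℕ}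
    (hk : k ∈ Icc 1 N) (φ : ℕ → M) (hφ : ∀ m, φ (m + N) = φ m) :
    ∑ j ∈ (Icc 1 N).erase k, φ j = ∑ l ∈ Icc 1 (N - 1), φ (k + l) := by
  rw [mem_Icc] at hk
  -- reindex by `j ↦ j - k (mod N)`, taking representatives in `1, …, N - 1`
  refine sum_nbij' (fun j => if k < j then j - k else j + N - k)
    (fun l => if k + l ≤ N then k + l else k + l - N) ?_ ?_ ?_ ?_ ?_ <;>
    simp only [mem_erase, mem_Icc]
  all_goals try (intro j hj; split_ifs <;> omega)
  intro j hj
  split_ifs with hkj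
  · rw [Nat.add_sub_cancel' hkj.le]
  · rw [Nat.add_sub_cancel' (by omega), hφ]

noncomputable def polygonVertex (N m : ℕ) : ℂ :=
  exp ((2 * Real.pi * m / N : ℝ) * I)

namespace polygonVertex

lemma add (N m n : ℕ) :
    polygonVertex N (m + n) = polygonVertex N m * polygonVertex N n := by
  simp only [polygonVertex, ← exp_add]
  push_cast
  ring_nf

lemma add_self {N : ℕ} (hN : N ≠ 0) (m : ℕ) :
    polygonVertex N (m + N) = polygonVertex N m := by
  have hNC : (N : ℂ) ≠ 0 := Nat.cast_ne_zero.mpr hN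
  have hfull : polygonVertex N N = 1 := by
    rw [polygonVertex]
    push_cast
    rw [mul_div_assoc, div_self hNC, mul_one, exp_two_pi_mul_I]
  rw [add, hfull, mul_one]

lemma norm_eq_one (N m : ℕ) : ‖polygonVertex N m‖ = 1 :=
  norm_exp_ofReal_mul_I _

lemma norm_one_sub (N m : ℕ) :
    ‖1 - polygonVertex N m‖ = 2 * |Real.sin (Real.pi * m / N)| := by
  rw [polygonVertex, norm_sub_rev, mul_comm, norm_exp_I_mul_ofReal_sub_one, norm_mul,
    Real.norm_eq_abs, Real.norm_eq_abs, abs_two]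
  ring_nf

end polygonVertex

open polygonVertex in
lemma sum_polygon_interaction_eq {N k : ℕ} (hk : k ∈ Icc 1 N) {r₀ : ℝ} (hr : 0 ≤ r₀)
    (f : ℝ → ℝ) :
    ∑ j ∈ (Icc 1 N).erase k,
      (r₀ * polygonVertex N k - r₀ * polygonVertex N j) *
        (f ‖r₀ * polygonVertex N k - r₀ * polygonVertex N j‖ : ℂ) =
      r₀ * polygonVertex N k * ∑ l ∈ Icc 1 (N - 1),
        (1 - polygonVertex N l) * (f (2 * r₀ * |Real.sin (Real.pi * l / N)|) : ℂ) := by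
  have hN : N ≠ 0 := by rw [mem_Icc] at hk; omega
  rw [sum_erase_Icc_eq_sum_Icc_add hk _ (fun m => by rw [add_self hN]), mul_sum]
  refine sum_congr rfl fun l _ => ?_
  have hdiff : r₀ * polygonVertex N k - r₀ * polygonVertex N (k + l) =
      r₀ * polygonVertex N k * (1 - polygonVertex N l) := by
    rw [add]; ring
  have hnorm : ‖r₀ * polygonVertex N k * (1 - polygonVertex N l)‖ =
      2 * r₀ * |Real.sin (Real.pi * l / N)| := by
    rw [norm_mul, norm_mul, norm_real, norm_eq_one, norm_one_sub, Real.norm_of_nonneg hr]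
    ring
  rw [hdiff, hnorm, mul_assoc]

theorem stmt14_general (N : ℕ) (r₀ : ℝ) (hr : 0 < r₀) (f : ℝ → ℝ)
    (M₁ M₂ k₃ : ℝ) (v₀ : ℂ)
    (hv : M₁ = M₂ * ‖v₀‖ ^ 2)
    (hF : ∑ l ∈ Finset.Icc 1 (N - 1),
      (1 - Complex.exp ((2 * Real.pi * l / N : ℝ) * Complex.I)) *
        (f (2 * r₀ * |Real.sin (Real.pi * l / N)|) : ℂ) = 0)
    (p : ℕ → ℝ → ℂ)
    (hp : ∀ k t, p k t = v₀ * t + (r₀ : ℂ) * Complex.exp ((2 * Real.pi * k / N : ℝ) * Complex.I))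
    (q : ℕ → ℝ → ℂ) (hq : ∀ k t, q k t = v₀)
    (k : ℕ) (hk : k ∈ Finset.Icc 1 N) (t : ℝ) :
    deriv (p k) t = q k t -
        ∑ j ∈ (Finset.Icc 1 N).erase k,
          (p k t - p j t) * (f (‖p k t - p j t‖) : ℂ) ∧
      deriv (q k) t = (M₁ : ℂ) * q k t - (M₂ : ℂ) * q k t * (‖q k t‖ ^ 2 : ℝ) -
        (k₃ : ℂ) * ∑ j ∈ (Finset.Icc 1 N).erase k,
          (p k t - p j t) * (f (‖p k t - p j t‖) : ℂ) := by
  have hrel : ∀ j, p k t - p j t =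
      r₀ * polygonVertex N k - r₀ * polygonVertex N j := fun j => by
    rw [hp, hp, polygonVertex, polygonVertex]; ring
  have hF' : ∑ l ∈ Icc 1 (N - 1),
      (1 - polygonVertex N l) * (f (2 * r₀ * |Real.sin (Real.pi * l / N)|) : ℂ) = 0 := hF
  have hsum : ∑ j ∈ (Icc 1 N).erase k, (p k t - p j t) * (f ‖p k t - p j t‖ : ℂ) = 0 := by
    simp only [hrel, sum_polygon_interaction_eq hk hr.le, hF', mul_zero]
  have hp' : deriv (p k) t = v₀ := by
    have hline : HasDerivAt (fun s : ℝ => v₀ * s) v₀ t := by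
      simpa using ((hasDerivAt_id t).ofReal_comp).const_mul v₀
    rw [funext (hp k)]
    exact hline.add_const _ |>.deriv
  have hq' : deriv (q k) t = 0 := by
    rw [funext (hq k)]; exact deriv_const t v₀
  refine ⟨by rw [hp', hq, hsum, sub_zero], ?_⟩
  rw [hq', hq, hsum, mul_zero, sub_zero, hv]
  push_cast
  ring

theorem stmt14 (N : ℕ) (hN : 2 ≤ N) (r₀ : ℝ) (hr : 0 < r₀) (f : ℝ → ℝ)
    (M₁ M₂ k₃ : ℝ) (hM₁ : 0 < M₁) (hM₂ : 0 < M₂) (v₀ : ℂ)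
    (hv : M₁ = M₂ * ‖v₀‖ ^ 2)
    (hF : ∑ l ∈ Finset.Icc 1 (N - 1),
      (1 - Complex.exp ((2 * Real.pi * l / N : ℝ) * Complex.I)) *
        (f (2 * r₀ * |Real.sin (Real.pi * l / N)|) : ℂ) = 0)
    (p : ℕ → ℝ → ℂ)
    (hp : ∀ k t, p k t = v₀ * t + (r₀ : ℂ) * Complex.exp ((2 * Real.pi * k / N : ℝ) * Complex.I))
    (q : ℕ → ℝ → ℂ) (hq : ∀ k t, q k t = v₀)
    (k : ℕ) (hk : k ∈ Finset.Icc 1 N) (t : ℝ) :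
    deriv (p k) t = q k t -
        ∑ j ∈ (Finset.Icc 1 N).erase k,
          (p k t - p j t) * (f (‖p k t - p j t‖) : ℂ) ∧
      deriv (q k) t = (M₁ : ℂ) * q k t - (M₂ : ℂ) * q k t * (‖q k t‖ ^ 2 : ℝ) -
        (k₃ : ℂ) * ∑ j ∈ (Finset.Icc 1 N).erase k,
          (p k t - p j t) * (f (‖p k t - p j t‖) : ℂ) :=
  stmt14_general N r₀ hr f M₁ M₂ k₃ v₀ hv hF p hp q hq k hk t
end
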